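/- Let S(V) be a right-handed cofree cocommutative Hopf algebra with product ∗ and let π denote the projection of ∗ onto V. For primitive elements a, b ∈ V, one has a∗b = π(a⊗b) + ab, where ab denotes the symmetric product (polynomial product) in S^2(V). -/

import Mathlib

open TensorProduct MvPolynomial

/-- The unshuffle coproduct on the polynomial (symmetric) coalgebra `S(V) = K[X_i]`:
the algebra map (for the polynomial product) determined by making each variable primitive. -/
noncomputable def unshuffle (K : Type*) (σ : Type*) [CommRing K] :
    MvPolynomial σ K →ₐ[K] MvPolynomial σ K ⊗[K] MvPolynomial σ K :=
  MvPolynomial.aeval (fun i : σ =>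
    (X i ⊗ₜ[K] 1 + 1 ⊗ₜ[K] X i : MvPolynomial σ K ⊗[K] MvPolynomial σ K))

/-- The counit of the polynomial coalgebra: the projection on `S^0(V) = K`. -/
noncomputable def polyCounit (K : Type*) (σ : Type*) [CommRing K] :
    MvPolynomial σ K →ₐ[K] K :=
  MvPolynomial.aeval (fun _ : σ => (0 : K))

/-! Since `a` and `b` are primitive, compatibility of `∗` with the unshuffle coproduct and the unit
gives `Δ(a ∗ b) = (a ∗ b) ⊗ 1 + 1 ⊗ (a ∗ b) + a ⊗ b + b ⊗ a`, and `Δ(ab)` has the same shape, so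
`a ∗ b - ab` is primitive. In characteristic zero the primitives of `S(V)` are exactly `V`:
multiplying out `Δp = p ⊗ 1 + 1 ⊗ p` gives `p(2X) = 2p`, i.e. `2 ^ |d| = 2` for every monomial
`X^d` of `p`. -/

namespace MvPolynomial

variable {R σ : Type*} [CommSemiring R]

lemma aeval_smul_X_monomial (c : R) (d : σ →₀ ℕ) (r : R) :
    aeval (fun i => c • X i) (monomial d r) = c ^ d.degree • monomial d r := by
  rw [aeval_monomial, monomial_eq, Finsupp.prod, Finsupp.prod, Finsupp.degree_apply]
  simp only [smul_eq_C_mul, mul_pow, Finset.prod_mul_distrib, ← map_pow, ← map_prod,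
    Finset.prod_pow_eq_pow_sum, algebraMap_eq]
  ring

lemma coeff_aeval_smul_X (c : R) (p : MvPolynomial σ R) (d : σ →₀ ℕ) :
    coeff d (aeval (fun i => c • X i) p) = c ^ d.degree * coeff d p := by
  classical
  induction p using MvPolynomial.induction_on' with
  | add p q hp hq => simp only [map_add, coeff_add, hp, hq, mul_add]
  | monomial u r =>
    rw [aeval_smul_X_monomial, coeff_smul, coeff_monomial, smul_eq_mul]
    split_ifs with h
    · rw [h]
    · simp

end MvPolynomial

section Primitives

variable {K σ : Type*} [CommRing K]

variable (K σ) in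
noncomputable def unshufflePrimitives : Submodule K (MvPolynomial σ K) :=
  LinearMap.ker ((unshuffle K σ).toLinearMap - (TensorProduct.mk K _ _).flip 1 -
    TensorProduct.mk K _ _ 1)

lemma mem_unshufflePrimitives {p : MvPolynomial σ K} :
    p ∈ unshufflePrimitives K σ ↔ unshuffle K σ p = p ⊗ₜ 1 + 1 ⊗ₜ p := by
  simp [unshufflePrimitives, sub_sub, sub_eq_zero]

lemma unshuffle_X (i : σ) : unshuffle K σ (X i) = X i ⊗ₜ 1 + 1 ⊗ₜ X i :=
  aeval_X _ i

lemma lmul'_unshuffle (p : MvPolynomial σ K) :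
    Algebra.TensorProduct.lmul' K (unshuffle K σ p) = aeval (fun i => (2 : K) • X i) p := by
  rw [unshuffle, comp_aeval_apply]
  simp [two_smul]

lemma homogeneousSubmodule_one_le_unshufflePrimitives :
    homogeneousSubmodule σ K 1 ≤ unshufflePrimitives K σ := by
  rw [homogeneousSubmodule_one_eq_span_X, Submodule.span_le]
  rintro _ ⟨i, rfl⟩
  exact mem_unshufflePrimitives.2 (unshuffle_X i)

lemma unshufflePrimitives_le_homogeneousSubmodule_one [IsDomain K] [CharZero K] :
    unshufflePrimitives K σ ≤ homogeneousSubmodule σ K 1 := by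
  intro p hp
  have hdouble : aeval (fun i => (2 : K) • X i) p = (2 : K) • p := by
    rw [← lmul'_unshuffle, mem_unshufflePrimitives.1 hp]
    simp [two_smul]
  intro d hd
  have h2 : (2 : K) ^ d.degree = 2 ^ 1 := by
    refine mul_right_cancel₀ hd ?_
    rw [← coeff_aeval_smul_X, hdouble, coeff_smul, pow_one, smul_eq_mul]
  rw [Pi.one_def, ← Finsupp.degree_eq_weight_one]
  exact Nat.pow_right_injective le_rfl (by exact_mod_cast h2)

end Primitives

section ProductOfPrimitives

variable {K σ : Type*} [CommRing K] {a b : MvPolynomial σ K}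

lemma unshuffle_mul_of_mem_unshufflePrimitives (ha : a ∈ unshufflePrimitives K σ)
    (hb : b ∈ unshufflePrimitives K σ) :
    unshuffle K σ (a * b) = (a * b) ⊗ₜ 1 + 1 ⊗ₜ (a * b) + (a ⊗ₜ b + b ⊗ₜ a) := by
  rw [map_mul, mem_unshufflePrimitives.1 ha, mem_unshufflePrimitives.1 hb]
  simp only [add_mul, mul_add, Algebra.TensorProduct.tmul_mul_tmul, one_mul, mul_one]
  abel

lemma unshuffle_apply_of_mem_unshufflePrimitives
    (m : MvPolynomial σ K →ₗ[K] MvPolynomial σ K →ₗ[K] MvPolynomial σ K)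
    (hone : ∀ x : MvPolynomial σ K, m 1 x = x ∧ m x 1 = x)
    (hcomul : ∀ x y : MvPolynomial σ K,
      unshuffle K σ (m x y) =
        TensorProduct.map (TensorProduct.lift m) (TensorProduct.lift m)
          (TensorProduct.tensorTensorTensorComm K (MvPolynomial σ K) (MvPolynomial σ K)
              (MvPolynomial σ K) (MvPolynomial σ K)
            (unshuffle K σ x ⊗ₜ[K] unshuffle K σ y)))
    (ha : a ∈ unshufflePrimitives K σ) (hb : b ∈ unshufflePrimitives K σ) :
    unshuffle K σ (m a b) = m a b ⊗ₜ 1 + 1 ⊗ₜ m a b + (a ⊗ₜ b + b ⊗ₜ a) := by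
  rw [hcomul, mem_unshufflePrimitives.1 ha, mem_unshufflePrimitives.1 hb]
  simp only [tmul_add, add_tmul, map_add, tensorTensorTensorComm_tmul, map_tmul, lift.tmul,
    (hone _).1, (hone _).2]
  abel

end ProductOfPrimitives

theorem rightHanded_product_on_primitives_general {K σ : Type*} [Field K] [CharZero K]
    (m : MvPolynomial σ K →ₗ[K] MvPolynomial σ K →ₗ[K] MvPolynomial σ K)
    (hone : ∀ x : MvPolynomial σ K, m 1 x = x ∧ m x 1 = x)
    (hcomul : ∀ x y : MvPolynomial σ K,
      unshuffle K σ (m x y) =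
        TensorProduct.map (TensorProduct.lift m) (TensorProduct.lift m)
          (TensorProduct.tensorTensorTensorComm K (MvPolynomial σ K) (MvPolynomial σ K)
              (MvPolynomial σ K) (MvPolynomial σ K)
            (unshuffle K σ x ⊗ₜ[K] unshuffle K σ y))) :
    ∀ a b : MvPolynomial σ K,
      a ∈ homogeneousSubmodule σ K 1 → b ∈ homogeneousSubmodule σ K 1 →
      m a b = homogeneousComponent 1 (m a b) + a * b := by
  intro a b ha hb
  have hab : a * b ∈ homogeneousSubmodule σ K 2 :=
    homogeneousSubmodule_mul 1 1 (Submodule.mul_mem_mul ha hb)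
  have ha' := homogeneousSubmodule_one_le_unshufflePrimitives ha
  have hb' := homogeneousSubmodule_one_le_unshufflePrimitives hb
  have hdiff : m a b - a * b ∈ homogeneousSubmodule σ K 1 := by
    refine unshufflePrimitives_le_homogeneousSubmodule_one (mem_unshufflePrimitives.2 ?_)
    rw [map_sub, unshuffle_apply_of_mem_unshufflePrimitives m hone hcomul ha' hb',
      unshuffle_mul_of_mem_unshufflePrimitives ha' hb', sub_tmul, tmul_sub]
    abel
  have hcomp : homogeneousComponent 1 (m a b) = m a b - a * b :=
    calc homogeneousComponent 1 (m a b)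
        = homogeneousComponent 1 (m a b - a * b) + homogeneousComponent 1 (a * b) := by
          rw [← map_add, sub_add_cancel]
      _ = m a b - a * b := by
          simp [homogeneousComponent_of_mem hdiff, homogeneousComponent_of_mem hab]
  rw [hcomp, sub_add_cancel]

/-- Let `S(V)` (realized as the symmetric coalgebra `K[X_i]` with the unshuffle coproduct)
be a right-handed cofree cocommutative Hopf algebra with product `∗ = m`, and let `π` denote
the projection of `∗` onto `V` (the degree-one homogeneous component).  For primitive elements
`a, b ∈ V` one has `a ∗ b = π(a⊗b) + ab`, where `ab` is the symmetric (polynomial) product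
in `S²(V)`. -/
theorem rightHanded_product_on_primitives {K σ : Type*} [Field K] [CharZero K]
    (m : MvPolynomial σ K →ₗ[K] MvPolynomial σ K →ₗ[K] MvPolynomial σ K)
    (hone : ∀ x : MvPolynomial σ K, m 1 x = x ∧ m x 1 = x)
    (hassoc : ∀ x y z : MvPolynomial σ K, m (m x y) z = m x (m y z))
    (hcomul : ∀ x y : MvPolynomial σ K,
      unshuffle K σ (m x y) =
        TensorProduct.map (TensorProduct.lift m) (TensorProduct.lift m)
          (TensorProduct.tensorTensorTensorComm K (MvPolynomial σ K) (MvPolynomial σ K)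
              (MvPolynomial σ K) (MvPolynomial σ K)
            (unshuffle K σ x ⊗ₜ[K] unshuffle K σ y)))
    (hcounit : ∀ x y : MvPolynomial σ K,
      polyCounit K σ (m x y) = polyCounit K σ x * polyCounit K σ y)
    (hrh : ∀ (n k : ℕ) (x y : MvPolynomial σ K), 2 ≤ n →
      x ∈ homogeneousSubmodule σ K n → y ∈ homogeneousSubmodule σ K k →
      homogeneousComponent 0 (m x y) = 0 ∧ homogeneousComponent 1 (m x y) = 0) :
    ∀ a b : MvPolynomial σ K,
      a ∈ homogeneousSubmodule σ K 1 → b ∈ homogeneousSubmodule σ K 1 →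
      m a b = homogeneousComponent 1 (m a b) + a * b :=
  rightHanded_product_on_primitives_general m hone hcomul
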